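/- Let R̂_1 be an optimal solution to the admissible policy teaching problem P1 and R̂_2 an optimal solution to the surrogate problem P4 (which forces some admissible policy π exactly on its visited states). Then R̂_2 is feasible for P1, and the objective l(R) = max_{π ∈ OPT^ε(R)} (‖R̄ - R‖_2 - λ ρ^{π,R̄}) satisfies l(R̂_1) ≤ l(R̂_2) ≤ l(R̂_1) + (ε/μ_min)·√(|S|·|A|). -/

import Mathlib

open scoped BigOperators

/-- A finite Markov decision process with discount factor `γ ∈ [0,1)` and initial
state distribution `init`. -/
structure MDP (S A : Type*) [Fintype S] [Fintype A] where
  P : S → A → S → ℝ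
  init : S → ℝ
  γ : ℝ
  P_nonneg : ∀ s a s', 0 ≤ P s a s'
  P_sum : ∀ s a, ∑ s', P s a s' = 1
  init_nonneg : ∀ s, 0 ≤ init s
  init_sum : ∑ s, init s = 1
  γ_nonneg : 0 ≤ γ
  γ_lt_one : γ < 1

variable {S A : Type*} [Fintype S] [Fintype A]

/-- One-step evolution of a state distribution under policy `π`. -/
def MDP.step (M : MDP S A) (π : S → A) (d : S → ℝ) : S → ℝ :=
  fun s' => ∑ s, d s * M.P s (π s) s'

/-- Distribution of the state `s_{t+1}` when executing `π` from `s_1 ~ init`. -/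
def MDP.stateDist (M : MDP S A) (π : S → A) : ℕ → S → ℝ
  | 0 => M.init
  | t + 1 => M.step π (M.stateDist π t)

/-- Discounted state occupancy measure
`μ^π(s) = E[(1-γ) ∑_{t ≥ 1} γ^{t-1} 1{s_t = s}]`. -/
noncomputable def MDP.occ (M : MDP S A) (π : S → A) (s : S) : ℝ :=
  (1 - M.γ) * ∑' t : ℕ, M.γ ^ t * M.stateDist π t s

/-- The score `ρ^{π,R} = E[(1-γ) ∑_{t ≥ 1} γ^{t-1} R(s_t, a_t)]` of policy `π`. -/
noncomputable def MDP.score (M : MDP S A) (π : S → A) (R : S → A → ℝ) : ℝ :=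
  (1 - M.γ) * ∑' t : ℕ, M.γ ^ t * ∑ s, M.stateDist π t s * R s (π s)

/-- Distribution of the state `t+1` steps after taking action `a0` in state `s0`
and following `π` afterwards. -/
def MDP.stateDistFrom (M : MDP S A) (π : S → A) (s0 : S) (a0 : A) : ℕ → S → ℝ
  | 0 => M.P s0 a0
  | t + 1 => M.step π (M.stateDistFrom π s0 a0 t)

/-- State-action value
`Q^{π,R}(s,a) = E[∑_{t ≥ 1} γ^{t-1} R(s_t,a_t) | s_1 = s, a_1 = a, then follow π]`. -/
noncomputable def MDP.Q (M : MDP S A) (π : S → A) (R : S → A → ℝ) (s : S) (a : A) : ℝ :=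
  R s a + ∑' t : ℕ, M.γ ^ (t + 1) * ∑ s', M.stateDistFrom π s a t s' * R s' (π s')

/-- Euclidean (`L2`) distance between two reward functions. -/
noncomputable def rdist (R R' : S → A → ℝ) : ℝ :=
  Real.sqrt (∑ s, ∑ a, (R s a - R' s a) ^ 2)

/-- The set `OPT^ε_det(R)` of `ε`-optimal deterministic policies under reward `R`. -/
noncomputable def MDP.OPT (M : MDP S A) (R : S → A → ℝ) (ε : ℝ) : Set (S → A) :=
  {π | M.score π R > (⨆ π' : S → A, M.score π' R) - ε}

/-- The set of admissible deterministic policies induced by per-state admissible action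
sets. -/
def admissiblePolicies (M : MDP S A) (Aadm : S → Set A) : Set (S → A) :=
  {π | ∀ s, π s ∈ Aadm s ∨ M.occ π s = 0}

/-- The objective `l(R)` of the admissible policy teaching problem P1. -/
noncomputable def lfun [DecidableEq S] (M : MDP S A) (Rbar : S → A → ℝ)
    (ε lam : ℝ) (R : S → A → ℝ) : ℝ :=
  ⨆ π : M.OPT R ε, (rdist Rbar R - lam * M.score π.1 Rbar)

/-- A pair `(π, R)` is feasible for the surrogate problem P4. -/
def feasible4 (M : MDP S A) (ε : ℝ) (Padm : Set (S → A))
    (π : S → A) (R : S → A → ℝ) : Prop :=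
  π ∈ Padm ∧ M.OPT R ε ⊆ {π' | ∀ s, 0 < M.occ π s → π' s = π s}

/-- The objective of the surrogate problem P4. -/
noncomputable def objective4 (M : MDP S A) (Rbar : S → A → ℝ) (lam : ℝ)
    (π : S → A) (R : S → A → ℝ) : ℝ :=
  rdist Rbar R - lam * M.score π Rbar

/-- `μ_min`: the minimum of `μ^π(s)` over all deterministic policies `π` and states `s`
with `μ^π(s) > 0`. -/
noncomputable def muMin (M : MDP S A) : ℝ :=
  ⨅ p : {p : (S → A) × S // 0 < M.occ p.1 p.2}, M.occ p.1.1 p.1.2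


/-!
Every policy that agrees with `π` on the states `π` visits has the same occupancy measure and
hence the same score, so the P4 constraint on `R̂₂` makes every `ε`-optimal policy admissible and
collapses `l(R̂₂)` to the P4 objective of `(π₂, R̂₂)`.

For the upper bound take a policy `σ` optimal for `R̂₁`; it is `ε`-optimal, hence admissible.
Adding the bonus `c = ε / μ_min` to the actions of `σ` raises its score by exactly `c`, while a
policy that deviates from `σ` at a state `s` it visits misses at least `c · μ^π(s) ≥ ε` of that
bonus. So the bonus reward `R'` forces `σ` and `(σ, R')` is feasible for P4, while `R'` differs
from `R̂₁` by at most `c` in each of the `|S|·|A|` coordinates.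
-/

open Finset

namespace MDP

variable (M : MDP S A)

theorem one_sub_γ_pos : 0 < 1 - M.γ := sub_pos.2 M.γ_lt_one

theorem stateDist_nonneg (π : S → A) (t : ℕ) (s : S) : 0 ≤ M.stateDist π t s := by
  induction t generalizing s with
  | zero => exact M.init_nonneg s
  | succ t ih => exact sum_nonneg fun s' _ => mul_nonneg (ih s') (M.P_nonneg _ _ _)

theorem sum_stateDist (π : S → A) (t : ℕ) : ∑ s, M.stateDist π t s = 1 := by
  induction t with
  | zero => exact M.init_sum
  | succ t ih =>
    simp only [stateDist, step]
    rw [sum_comm]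
    simpa only [← mul_sum, M.P_sum, mul_one] using ih

theorem stateDist_le_one (π : S → A) (t : ℕ) (s : S) : M.stateDist π t s ≤ 1 :=
  M.sum_stateDist π t ▸ single_le_sum (fun s' _ => M.stateDist_nonneg π t s') (mem_univ s)

theorem discounted_stateDist_nonneg (π : S → A) (t : ℕ) (s : S) :
    0 ≤ M.γ ^ t * M.stateDist π t s :=
  mul_nonneg (pow_nonneg M.γ_nonneg t) (M.stateDist_nonneg π t s)

theorem discounted_stateDist_succ (π : S → A) (t : ℕ) (s' : S) :
    M.γ ^ (t + 1) * M.stateDist π (t + 1) s' =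
      M.γ * ∑ s, M.γ ^ t * M.stateDist π t s * M.P s (π s) s' := by
  simp only [stateDist, step, mul_sum, pow_succ]
  exact sum_congr rfl fun s _ => by ring

theorem summable_discounted_stateDist (π : S → A) (s : S) :
    Summable fun t => M.γ ^ t * M.stateDist π t s :=
  (summable_geometric_of_lt_one M.γ_nonneg M.γ_lt_one).of_nonneg_of_le
    (M.discounted_stateDist_nonneg π · s)
    fun t => mul_le_of_le_one_right (pow_nonneg M.γ_nonneg t) (M.stateDist_le_one π t s)

theorem occ_nonneg (π : S → A) (s : S) : 0 ≤ M.occ π s :=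
  mul_nonneg M.one_sub_γ_pos.le (tsum_nonneg (M.discounted_stateDist_nonneg π · s))

theorem le_occ (π : S → A) (t : ℕ) (s : S) :
    (1 - M.γ) * (M.γ ^ t * M.stateDist π t s) ≤ M.occ π s :=
  mul_le_mul_of_nonneg_left
    ((M.summable_discounted_stateDist π s).le_tsum t fun j _ =>
      M.discounted_stateDist_nonneg π j s)
    M.one_sub_γ_pos.le

theorem occ_pos_of_discounted_stateDist_pos {π : S → A} {t : ℕ} {s : S}
    (h : 0 < M.γ ^ t * M.stateDist π t s) : 0 < M.occ π s :=
  (mul_pos M.one_sub_γ_pos h).trans_le (M.le_occ π t s)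

theorem sum_occ (π : S → A) : ∑ s, M.occ π s = 1 := by
  simp only [occ, ← mul_sum]
  rw [← Summable.tsum_finsetSum fun s _ => M.summable_discounted_stateDist π s]
  simp only [← mul_sum, M.sum_stateDist, mul_one]
  rw [tsum_geometric_of_lt_one M.γ_nonneg M.γ_lt_one, mul_inv_cancel₀ M.one_sub_γ_pos.ne']

theorem score_eq_sum_occ (π : S → A) (R : S → A → ℝ) :
    M.score π R = ∑ s, M.occ π s * R s (π s) := by
  have hsum (s : S) : Summable fun t => M.γ ^ t * (M.stateDist π t s * R s (π s)) := by
    simpa only [mul_assoc] using (M.summable_discounted_stateDist π s).mul_right (R s (π s))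
  simp only [score, mul_sum]
  rw [Summable.tsum_finsetSum fun s _ => hsum s]
  simp only [occ, mul_assoc, ← tsum_mul_right, mul_sum]

section AgreeOnSupport

variable {π π' : S → A} (h : ∀ s, 0 < M.occ π s → π' s = π s)
include h

theorem discounted_stateDist_eq_of_agree_on_support (t : ℕ) (s : S) :
    M.γ ^ t * M.stateDist π' t s = M.γ ^ t * M.stateDist π t s := by
  induction t generalizing s with
  | zero => rfl
  | succ t ih =>
    rw [discounted_stateDist_succ, discounted_stateDist_succ]
    congr 1
    refine sum_congr rfl fun s' _ => ?_
    rw [ih s']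
    rcases (M.discounted_stateDist_nonneg π t s').eq_or_lt with h0 | h0
    · rw [← h0, zero_mul, zero_mul]
    · rw [h s' (M.occ_pos_of_discounted_stateDist_pos h0)]

theorem occ_eq_of_agree_on_support : M.occ π' = M.occ π := by
  funext s
  simp only [occ, M.discounted_stateDist_eq_of_agree_on_support h _ s]

theorem score_eq_of_agree_on_support (R : S → A → ℝ) : M.score π' R = M.score π R := by
  rw [score_eq_sum_occ, score_eq_sum_occ, M.occ_eq_of_agree_on_support h]
  refine sum_congr rfl fun s _ => ?_
  rcases (M.occ_nonneg π s).eq_or_lt with h0 | h0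
  · rw [← h0, zero_mul, zero_mul]
  · rw [h s h0]

end AgreeOnSupport

theorem exists_occ_pos_ne_of_occ_pos_ne {π σ : S → A} {s : S} (hs : 0 < M.occ σ s)
    (hne : π s ≠ σ s) : ∃ s', 0 < M.occ π s' ∧ π s' ≠ σ s' := by
  by_contra! hagree
  have hocc := M.occ_eq_of_agree_on_support fun s' h => (hagree s' h).symm
  exact hne (hagree s (hocc ▸ hs))

end MDP

def addBonus [DecidableEq A] (R : S → A → ℝ) (σ : S → A) (c : ℝ) : S → A → ℝ :=
  fun s a => R s a + if a = σ s then c else 0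

namespace MDP

variable (M : MDP S A)

section Bonus

variable [DecidableEq A] (R : S → A → ℝ) (σ : S → A) (c : ℝ)

theorem score_addBonus (π : S → A) :
    M.score π (addBonus R σ c) =
      M.score π R + c * ∑ s, if π s = σ s then M.occ π s else 0 := by
  simp only [score_eq_sum_occ, addBonus, mul_add, sum_add_distrib, mul_sum]
  congr 1
  refine sum_congr rfl fun s _ => ?_
  split_ifs <;> ring

theorem score_addBonus_self : M.score σ (addBonus R σ c) = M.score σ R + c := by
  simp only [score_addBonus, if_true, sum_occ, mul_one]

theorem score_addBonus_le (hc : 0 ≤ c) {π : S → A} {s' : S} (hne : π s' ≠ σ s') :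
    M.score π (addBonus R σ c) ≤ M.score π R + c * (1 - M.occ π s') := by
  classical
  rw [score_addBonus, ← M.sum_occ π, ← sum_erase_eq_sub (mem_univ s'),
    ← sum_erase univ (f := fun s => if π s = σ s then M.occ π s else 0) (if_neg hne)]
  gcongr with s
  split_ifs
  · rfl
  · exact M.occ_nonneg π s

end Bonus

theorem score_bddAbove (R : S → A → ℝ) : BddAbove (Set.range fun π => M.score π R) :=
  (Set.finite_range _).bddAbove

theorem exists_forall_score_le [Nonempty A] (R : S → A → ℝ) :
    ∃ σ, ∀ π, M.score π R ≤ M.score σ R :=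
  Finite.exists_max _

theorem mem_OPT_of_forall_score_le {R : S → A → ℝ} {ε : ℝ} (hε : 0 < ε) {σ : S → A}
    (hσ : ∀ π, M.score π R ≤ M.score σ R) : σ ∈ M.OPT R ε := by
  have : Nonempty (S → A) := ⟨σ⟩
  show M.score σ R > (⨆ π, M.score π R) - ε
  linarith [ciSup_le hσ]

theorem OPT_addBonus_subset [DecidableEq A] {R : S → A → ℝ} {σ : S → A}
    (hσ : ∀ π, M.score π R ≤ M.score σ R) {c ε : ℝ} (hc : 0 ≤ c)
    (hεc : ∀ π s, 0 < M.occ π s → ε ≤ c * M.occ π s) :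
    M.OPT (addBonus R σ c) ε ⊆ {π | ∀ s, 0 < M.occ σ s → π s = σ s} := by
  intro π hπ s hs
  by_contra hne
  obtain ⟨s', hs', hne'⟩ := M.exists_occ_pos_ne_of_occ_pos_ne hs hne
  have hdev := M.score_addBonus_le R σ c hc hne'
  have hsup := le_ciSup (M.score_bddAbove (addBonus R σ c)) σ
  have hπ : M.score π (addBonus R σ c) > (⨆ π, M.score π (addBonus R σ c)) - ε := hπ
  rw [score_addBonus_self] at hsup
  linarith [hσ π, hεc π s' hs']

theorem OPT_subset_admissiblePolicies {ε : ℝ} {Aadm : S → Set A} {π : S → A}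
    {R : S → A → ℝ} (h : feasible4 M ε (admissiblePolicies M Aadm) π R) :
    M.OPT R ε ⊆ admissiblePolicies M Aadm := by
  intro π' hπ' s
  have hagree := h.2 hπ'
  rcases (M.occ_nonneg π' s).eq_or_lt with h0 | h0
  · exact Or.inr h0.symm
  · have hpos : 0 < M.occ π s := M.occ_eq_of_agree_on_support hagree ▸ h0
    rw [hagree s hpos]
    exact Or.inl ((h.1 s).resolve_right hpos.ne')

end MDP

section MuMin

variable (M : MDP S A)

theorem muMin_le_occ {π : S → A} {s : S} (h : 0 < M.occ π s) : muMin M ≤ M.occ π s :=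
  ciInf_le ⟨0, by rintro _ ⟨p, rfl⟩; exact M.occ_nonneg _ _⟩ (⟨(π, s), h⟩ :
    {p : (S → A) × S // 0 < M.occ p.1 p.2})

theorem muMin_pos [Nonempty A] : 0 < muMin M := by
  obtain ⟨s, -, hs⟩ := exists_lt_of_sum_lt (s := univ) (f := 0) (g := M.init) (by simp [M.init_sum])
  have : Nonempty {p : (S → A) × S // 0 < M.occ p.1 p.2} :=
    ⟨⟨(Classical.arbitrary _, s), M.occ_pos_of_discounted_stateDist_pos (t := 0)
      (by simpa [MDP.stateDist] using hs)⟩⟩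
  obtain ⟨p, hp⟩ := Finite.exists_min fun p : {p : (S → A) × S // 0 < M.occ p.1 p.2} =>
    M.occ p.1.1 p.1.2
  exact p.2.trans_le (le_ciInf hp)

theorem le_div_muMin_mul_occ [Nonempty A] {ε : ℝ} (hε : 0 ≤ ε) {π : S → A} {s : S}
    (h : 0 < M.occ π s) : ε ≤ ε / muMin M * M.occ π s := by
  rw [div_mul_eq_mul_div, le_div_iff₀ (muMin_pos M)]
  exact mul_le_mul_of_nonneg_left (muMin_le_occ M h) hε

end MuMin

section Rdist

theorem rdist_eq_dist (X Y : S → A → ℝ) :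
    rdist X Y = dist (WithLp.toLp 2 fun p : S × A => X p.1 p.2)
      (WithLp.toLp 2 fun p : S × A => Y p.1 p.2) := by
  simp only [rdist, EuclideanSpace.dist_eq, Fintype.sum_prod_type, Real.dist_eq, sq_abs]

theorem rdist_triangle (X Y Z : S → A → ℝ) : rdist X Z ≤ rdist X Y + rdist Y Z := by
  simp only [rdist_eq_dist]
  exact dist_triangle _ _ _

theorem rdist_le_mul_sqrt_card {X Y : S → A → ℝ} {c : ℝ} (hc : 0 ≤ c)
    (h : ∀ s a, |X s a - Y s a| ≤ c) :
    rdist X Y ≤ c * √((Fintype.card S : ℝ) * Fintype.card A) := by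
  calc rdist X Y ≤ √(∑ _s : S, ∑ _a : A, c ^ 2) := by
        refine Real.sqrt_le_sqrt (sum_le_sum fun s _ => sum_le_sum fun a _ => ?_)
        rw [← sq_abs]
        exact pow_le_pow_left₀ (abs_nonneg _) (h s a) 2
    _ = c * √((Fintype.card S : ℝ) * Fintype.card A) := by
        simp only [sum_const, card_univ, nsmul_eq_mul]
        rw [← mul_assoc, Real.sqrt_mul (by positivity), Real.sqrt_sq hc, mul_comm]

theorem rdist_addBonus_le [DecidableEq A] (R : S → A → ℝ) (σ : S → A) {c : ℝ} (hc : 0 ≤ c) :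
    rdist R (addBonus R σ c) ≤ c * √((Fintype.card S : ℝ) * Fintype.card A) :=
  rdist_le_mul_sqrt_card hc fun s a => by
    simp only [addBonus, sub_add_cancel_left, abs_neg]
    split_ifs <;> simp [abs_of_nonneg hc, hc]

end Rdist

section Lfun

variable [DecidableEq S] (M : MDP S A) (Rbar : S → A → ℝ) {ε : ℝ} (lam : ℝ) {R : S → A → ℝ}

theorem le_lfun {π : S → A} (hπ : π ∈ M.OPT R ε) :
    rdist Rbar R - lam * M.score π Rbar ≤ lfun M Rbar ε lam R :=
  le_ciSup (f := fun π : M.OPT R ε => rdist Rbar R - lam * M.score π.1 Rbar)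
    (Set.finite_range _).bddAbove ⟨π, hπ⟩

theorem lfun_eq_objective4 {π : S → A} (hne : (M.OPT R ε).Nonempty)
    (h : M.OPT R ε ⊆ {π' | ∀ s, 0 < M.occ π s → π' s = π s}) :
    lfun M Rbar ε lam R = objective4 M Rbar lam π R := by
  have := hne.to_subtype
  calc lfun M Rbar ε lam R = ⨆ _ : M.OPT R ε, objective4 M Rbar lam π R :=
        iSup_congr fun π' => by
          rw [objective4, M.score_eq_of_agree_on_support (h π'.2)]
    _ = objective4 M Rbar lam π R := ciSup_const

end Lfun

theorem stmt11_general [DecidableEq S] [Nonempty A] (M : MDP S A) (Rbar : S → A → ℝ)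
    (ε lam : ℝ) (hε : 0 < ε)
    (Aadm : S → Set A)
    (R₁ : S → A → ℝ)
    (h1feas : M.OPT R₁ ε ⊆ admissiblePolicies M Aadm)
    (h1opt : ∀ R : S → A → ℝ, M.OPT R ε ⊆ admissiblePolicies M Aadm →
      lfun M Rbar ε lam R₁ ≤ lfun M Rbar ε lam R)
    (π₂ : S → A) (R₂ : S → A → ℝ)
    (h2feas : feasible4 M ε (admissiblePolicies M Aadm) π₂ R₂)
    (h2opt : ∀ (π : S → A) (R : S → A → ℝ),
      feasible4 M ε (admissiblePolicies M Aadm) π R →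
      objective4 M Rbar lam π₂ R₂ ≤ objective4 M Rbar lam π R) :
    M.OPT R₂ ε ⊆ admissiblePolicies M Aadm ∧
    lfun M Rbar ε lam R₁ ≤ lfun M Rbar ε lam R₂ ∧
    lfun M Rbar ε lam R₂ ≤ lfun M Rbar ε lam R₁ +
      (ε / muMin M) * Real.sqrt ((Fintype.card S : ℝ) * (Fintype.card A : ℝ)) := by
  classical
  have h2adm := M.OPT_subset_admissiblePolicies h2feas
  refine ⟨h2adm, h1opt R₂ h2adm, ?_⟩
  obtain ⟨σ₁, hσ₁⟩ := M.exists_forall_score_le R₁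
  obtain ⟨σ₂, hσ₂⟩ := M.exists_forall_score_le R₂
  have hσ₁opt := M.mem_OPT_of_forall_score_le hε hσ₁
  have hc : 0 ≤ ε / muMin M := div_nonneg hε.le (muMin_pos M).le
  have hfeas : feasible4 M ε (admissiblePolicies M Aadm) σ₁ (addBonus R₁ σ₁ (ε / muMin M)) :=
    ⟨h1feas hσ₁opt, M.OPT_addBonus_subset hσ₁ hc fun _ _ => le_div_muMin_mul_occ M hε.le⟩
  calc lfun M Rbar ε lam R₂ = objective4 M Rbar lam π₂ R₂ :=
        lfun_eq_objective4 M Rbar lam ⟨σ₂, M.mem_OPT_of_forall_score_le hε hσ₂⟩ h2feas.2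
    _ ≤ objective4 M Rbar lam σ₁ (addBonus R₁ σ₁ (ε / muMin M)) := h2opt _ _ hfeas
    _ ≤ (rdist Rbar R₁ - lam * M.score σ₁ Rbar) + rdist R₁ (addBonus R₁ σ₁ (ε / muMin M)) := by
        rw [objective4]
        linarith [rdist_triangle Rbar R₁ (addBonus R₁ σ₁ (ε / muMin M))]
    _ ≤ _ := add_le_add (le_lfun M Rbar lam hσ₁opt) (rdist_addBonus_le R₁ σ₁ hc)

/-- Proposition 2: Let `R̂₁` be an optimal solution to P1 and
`(π₂, R̂₂)` an optimal solution to the surrogate problem P4. Then `R̂₂` is feasible for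
P1 and `l(R̂₁) ≤ l(R̂₂) ≤ l(R̂₁) + (ε/μ_min)·√(|S|·|A|)`. -/
theorem stmt11 [DecidableEq S] [Nonempty A] (M : MDP S A) (Rbar : S → A → ℝ)
    (ε lam : ℝ) (hε : 0 < ε) (hlam : 0 ≤ lam)
    (Aadm : S → Set A) (hA : ∀ s, (Aadm s).Nonempty)
    (R₁ : S → A → ℝ)
    (h1feas : M.OPT R₁ ε ⊆ admissiblePolicies M Aadm)
    (h1opt : ∀ R : S → A → ℝ, M.OPT R ε ⊆ admissiblePolicies M Aadm →
      lfun M Rbar ε lam R₁ ≤ lfun M Rbar ε lam R)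
    (π₂ : S → A) (R₂ : S → A → ℝ)
    (h2feas : feasible4 M ε (admissiblePolicies M Aadm) π₂ R₂)
    (h2opt : ∀ (π : S → A) (R : S → A → ℝ),
      feasible4 M ε (admissiblePolicies M Aadm) π R →
      objective4 M Rbar lam π₂ R₂ ≤ objective4 M Rbar lam π R) :
    M.OPT R₂ ε ⊆ admissiblePolicies M Aadm ∧
    lfun M Rbar ε lam R₁ ≤ lfun M Rbar ε lam R₂ ∧
    lfun M Rbar ε lam R₂ ≤ lfun M Rbar ε lam R₁ +
      (ε / muMin M) * Real.sqrt ((Fintype.card S : ℝ) * (Fintype.card A : ℝ)) :=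
  stmt11_general M Rbar ε lam hε Aadm R₁ h1feas h1opt π₂ R₂ h2feas h2opt
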